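/- arXiv:1703.01779 — 2 statements merged into one kernel-verified Lean document; each statement's English description precedes it below -/
import Mathlib

section
/- Let f(c, ρ₁, ρ₂) = cosh ρ₁ · cosh ρ₂ · cosh c − sinh ρ₁ · sinh ρ₂. If 0 < c ≤ c', then for all real ρ₁, ρ₂: (f(c, ρ₁, ρ₂)² − 1)/(f(c', ρ₁, ρ₂)² − 1) ≥ ((cosh c − 1)/(cosh c' − 1))². -/
/-!
Write `f(c, ρ₁, ρ₂) = a t + e` with `a = cosh ρ₁ cosh ρ₂ > 0`, `t = cosh c - 1 > 0` and
`e = cosh (ρ₁ - ρ₂) ≥ 1`. Since `f² - 1 = (a t + (e - 1)) (a t + (e + 1))`, it suffices that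
`t ↦ (a t + d) / t` decreases for `d ≥ 0`, i.e. `t / t' ≤ (a t + d) / (a t' + d)` when `t ≤ t'`,
applied with `d = e - 1` and `d = e + 1`.
-/

noncomputable def f (c ρ₁ ρ₂ : ℝ) : ℝ :=
  Real.cosh ρ₁ * Real.cosh ρ₂ * Real.cosh c - Real.sinh ρ₁ * Real.sinh ρ₂

open Real

theorem div_le_mul_add_div_mul_add {t t' a d : ℝ} (ht : 0 < t) (htt' : t ≤ t') (ha : 0 < a)
    (hd : 0 ≤ d) : t / t' ≤ (a * t + d) / (a * t' + d) := by
  have ht' : 0 < t' := ht.trans_le htt'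
  rw [div_le_div_iff₀ ht' (by positivity)]
  nlinarith [mul_nonneg hd (sub_nonneg.2 htt')]

theorem div_sq_le_mul_add_sq_sub_one_div {t t' a e : ℝ} (ht : 0 < t) (htt' : t ≤ t')
    (ha : 0 < a) (he : 1 ≤ e) :
    (t / t') ^ 2 ≤ ((a * t + e) ^ 2 - 1) / ((a * t' + e) ^ 2 - 1) := by
  have hsq (x : ℝ) : (a * x + e) ^ 2 - 1 = (a * x + (e - 1)) * (a * x + (e + 1)) := by ring
  rw [hsq, hsq, mul_div_mul_comm, sq]
  exact mul_le_mul (div_le_mul_add_div_mul_add ht htt' ha (by linarith))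
    (div_le_mul_add_div_mul_add ht htt' ha (by linarith))
    (div_nonneg ht.le (ht.le.trans htt')) (div_nonneg (by nlinarith) (by nlinarith))

theorem f_eq_mul_cosh_sub_one_add_cosh_sub (c ρ₁ ρ₂ : ℝ) :
    f c ρ₁ ρ₂ = cosh ρ₁ * cosh ρ₂ * (cosh c - 1) + cosh (ρ₁ - ρ₂) := by
  rw [f, cosh_sub]
  ring

theorem stmt_6 (c c' : ℝ) (hc : 0 < c) (hcc' : c ≤ c') (ρ₁ ρ₂ : ℝ) :
    (f c ρ₁ ρ₂ ^ 2 - 1) / (f c' ρ₁ ρ₂ ^ 2 - 1)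
      ≥ ((Real.cosh c - 1) / (Real.cosh c' - 1)) ^ 2 := by
  have ht : 0 < cosh c - 1 := sub_pos.2 (one_lt_cosh.2 hc.ne')
  have htt' : cosh c - 1 ≤ cosh c' - 1 := by
    rw [sub_le_sub_iff_right, cosh_le_cosh, abs_of_pos hc, abs_of_pos (hc.trans_le hcc')]
    exact hcc'
  rw [f_eq_mul_cosh_sub_one_add_cosh_sub, f_eq_mul_cosh_sub_one_add_cosh_sub]
  exact div_sq_le_mul_add_sq_sub_one_div ht htt' (by positivity) (one_le_cosh _)
end

section
/- Let f(c, ρ₁, ρ₂) = cosh ρ₁ · cosh ρ₂ · cosh c − sinh ρ₁ · sinh ρ₂ and let d(c, ρ₁, ρ₂) = arccosh(f(c, ρ₁, ρ₂)). Suppose c, c' > 0 and (1/C) ≤ (cosh c − 1)/(cosh c' − 1) ≤ C for some C > 1. Then for all real ρ₁, ρ₂: |d(c', ρ₁, ρ₂) − d(c, ρ₁, ρ₂)| ≤ arccosh C. -/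
/-!
Write `f(c) - 1 = cosh ρ₁ cosh ρ₂ (cosh c - 1) + (cosh (ρ₁ - ρ₂) - 1)`: both summands are
nonnegative and only the first depends on `c`, so `cosh c' - 1 ≤ C (cosh c - 1)` with `C ≥ 1`
gives `f(c') - 1 ≤ C (f(c) - 1)`. For `x, C ≥ 1` the addition formula gives
`cosh (arcosh x + arcosh C) ≥ x C ≥ 1 + C (x - 1)`, so `f(c') - 1 ≤ C (f(c) - 1)` turns into
`d(c') ≤ d(c) + arcosh C`. The ratio hypotheses give this in both directions.
-/

noncomputable def arcosh (x : ℝ) : ℝ := Real.log (x + Real.sqrt (x ^ 2 - 1))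

noncomputable def d (c ρ₁ ρ₂ : ℝ) : ℝ := arcosh (f c ρ₁ ρ₂)

open Real (cosh sinh)

theorem Real.arcosh_le_arcosh_add_arcosh_of_sub_one_le_mul {x y C : ℝ} (hx : 1 ≤ x) (hy : 0 < y)
    (hC : 1 ≤ C) (h : y - 1 ≤ C * (x - 1)) : Real.arcosh y ≤ Real.arcosh x + Real.arcosh C := by
  have hsum_nonneg : 0 ≤ Real.arcosh x + Real.arcosh C :=
    add_nonneg (Real.arcosh_nonneg hx) (Real.arcosh_nonneg hC)
  have hsinh_nonneg : 0 ≤ sinh (Real.arcosh x) * sinh (Real.arcosh C) :=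
    mul_nonneg (Real.sinh_nonneg_iff.2 (Real.arcosh_nonneg hx))
      (Real.sinh_nonneg_iff.2 (Real.arcosh_nonneg hC))
  have hy_le : y ≤ cosh (Real.arcosh x + Real.arcosh C) := by
    rw [Real.cosh_add, Real.cosh_arcosh hx, Real.cosh_arcosh hC]
    nlinarith
  rw [← Real.arcosh_cosh hsum_nonneg]
  exact (Real.arcosh_le_arcosh hy (Real.cosh_pos _)).2 hy_le

theorem f_sub_one (c ρ₁ ρ₂ : ℝ) :
    f c ρ₁ ρ₂ - 1 = cosh ρ₁ * cosh ρ₂ * (cosh c - 1) + (cosh (ρ₁ - ρ₂) - 1) := by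
  rw [f, Real.cosh_sub]
  ring

theorem one_le_f (c ρ₁ ρ₂ : ℝ) : 1 ≤ f c ρ₁ ρ₂ := by
  have h := f_sub_one c ρ₁ ρ₂
  have hρ : 0 ≤ cosh ρ₁ * cosh ρ₂ * (cosh c - 1) :=
    mul_nonneg (by positivity) (sub_nonneg.2 (Real.one_le_cosh c))
  linarith [Real.one_le_cosh (ρ₁ - ρ₂)]

theorem f_sub_one_le_mul {c c' C : ℝ} (hC : 1 ≤ C) (h : cosh c' - 1 ≤ C * (cosh c - 1))
    (ρ₁ ρ₂ : ℝ) : f c' ρ₁ ρ₂ - 1 ≤ C * (f c ρ₁ ρ₂ - 1) := by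
  rw [f_sub_one, f_sub_one]
  have hc_scaled : cosh ρ₁ * cosh ρ₂ * (cosh c' - 1) ≤ cosh ρ₁ * cosh ρ₂ * (C * (cosh c - 1)) :=
    mul_le_mul_of_nonneg_left h (by positivity)
  have hρ : cosh (ρ₁ - ρ₂) - 1 ≤ C * (cosh (ρ₁ - ρ₂) - 1) :=
    le_mul_of_one_le_left (sub_nonneg.2 (Real.one_le_cosh _)) hC
  linarith

-- The `arcosh` above is definitionally Mathlib's `Real.arcosh`.
theorem d_le_d_add_arcosh {c c' C : ℝ} (hC : 1 ≤ C) (h : cosh c' - 1 ≤ C * (cosh c - 1))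
    (ρ₁ ρ₂ : ℝ) : d c' ρ₁ ρ₂ ≤ d c ρ₁ ρ₂ + arcosh C :=
  Real.arcosh_le_arcosh_add_arcosh_of_sub_one_le_mul (one_le_f c ρ₁ ρ₂)
    (one_pos.trans_le (one_le_f c' ρ₁ ρ₂)) hC (f_sub_one_le_mul hC h ρ₁ ρ₂)

theorem stmt_8_general (c c' C : ℝ) (hC : 1 < C)
    (h1 : 1 / C ≤ (Real.cosh c - 1) / (Real.cosh c' - 1))
    (h2 : (Real.cosh c - 1) / (Real.cosh c' - 1) ≤ C) (ρ₁ ρ₂ : ℝ) :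
    |d c' ρ₁ ρ₂ - d c ρ₁ ρ₂| ≤ arcosh C := by
  have hden : 0 < cosh c' - 1 := by
    have hratio : 0 < (cosh c - 1) / (cosh c' - 1) := (one_div_pos.2 (by linarith)).trans_le h1
    refine (sub_nonneg.2 (Real.one_le_cosh c')).lt_of_ne fun hzero => ?_
    rw [← hzero, div_zero] at hratio
    exact hratio.false
  have hc' : cosh c' - 1 ≤ C * (cosh c - 1) := by
    rw [div_le_div_iff₀ (by linarith) hden] at h1
    linarith
  have hc : cosh c - 1 ≤ C * (cosh c' - 1) := by
    rw [div_le_iff₀ hden] at h2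
    linarith
  rw [abs_sub_le_iff]
  exact ⟨by linarith [d_le_d_add_arcosh hC.le hc' ρ₁ ρ₂],
    by linarith [d_le_d_add_arcosh hC.le hc ρ₁ ρ₂]⟩

theorem stmt_8 (c c' C : ℝ) (hc : 0 < c) (hc' : 0 < c') (hC : 1 < C)
    (h1 : 1 / C ≤ (Real.cosh c - 1) / (Real.cosh c' - 1))
    (h2 : (Real.cosh c - 1) / (Real.cosh c' - 1) ≤ C) (ρ₁ ρ₂ : ℝ) :
    |d c' ρ₁ ρ₂ - d c ρ₁ ρ₂| ≤ arcosh C :=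
  stmt_8_general c c' C hC h1 h2 ρ₁ ρ₂
end
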